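/- Let G be a well-separated graph on n vertices (for a fixed positive integer s with ln ln n ≥ s), and let T be the union of all minimal non-expanding vertex subsets of G of size at most s−1. Then there exists a subset T₁ ⊆ T with |T₁| = |N(T)| such that G contains exactly one perfect matching between T₁ and N(T). -/

import Mathlib

open MeasureTheory Finset

attribute [local instance] Classical.propDecidable

set_option maxHeartbeats 800000

noncomputable section RankSparse

/-- Bernoulli measure on `Bool` with success probability `p`. -/
def bern (p : ℝ) : Measure Bool :=
  (Real.toNNReal p) • Measure.dirac true + (Real.toNNReal (1 - p)) • Measure.dirac false

instance (p : ℝ) : IsFiniteMeasure (bern p) := by unfold bern; infer_instance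

/-- Product measure: i.i.d. Bernoulli(p) entries indexed by pairs `(i,j)`. -/
def entriesMeasure (n : ℕ) (p : ℝ) : Measure (Fin n → Fin n → Bool) :=
  Measure.pi fun _ => Measure.pi fun _ => bern p

/-- The random sparsified symmetric matrix `Q(W,p)`: for `i ≤ j`,
`q_{ij} = w_{ij} ξ_{ij}` with `ξ_{ij}` Bernoulli, and `q_{ji} = q_{ij}`. -/
def QW {n : ℕ} (W : Matrix (Fin n) (Fin n) ℂ) (ω : Fin n → Fin n → Bool) :
    Matrix (Fin n) (Fin n) ℂ :=
  Matrix.of fun i j =>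
    if i ≤ j then (if ω i j then W i j else 0) else (if ω j i then W j i else 0)

/-- The adjacency relation of the graph `G(Q)` of a symmetric matrix:
`i` adjacent to `j` iff `q_{ij} ≠ 0` (self-loops allowed). -/
def adjOf {n : ℕ} (Q : Matrix (Fin n) (Fin n) ℂ) : Fin n → Fin n → Prop :=
  fun i j => Q i j ≠ 0

/-- The neighborhood `N(S)` of a vertex set: all vertices adjacent to at
least one vertex of `S` (may intersect `S`). -/
def nbr {n : ℕ} (A : Fin n → Fin n → Prop) (S : Finset (Fin n)) : Finset (Fin n) :=
  univ.filter fun v => ∃ u ∈ S, A u v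

/-- `S` is non-expanding if `|N(S)| < |S|`. -/
def nonExpanding {n : ℕ} (A : Fin n → Fin n → Prop) (S : Finset (Fin n)) : Prop :=
  (nbr A S).card < S.card

/-- Minimally non-expanding: non-expanding with no proper non-expanding subset. -/
def minNonExpanding {n : ℕ} (A : Fin n → Fin n → Prop) (S : Finset (Fin n)) : Prop :=
  nonExpanding A S ∧ ∀ T ⊂ S, ¬ nonExpanding A T

/-- Degree of a vertex: number of its neighbors (a loop makes `v` its own neighbor). -/
def deg {n : ℕ} (A : Fin n → Fin n → Prop) (v : Fin n) : ℕ :=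
  (univ.filter fun u => A v u).card

/-- A set is unobstructed if it contains no non-expanding subset. -/
def unobstructed {n : ℕ} (A : Fin n → Fin n → Prop) (S : Finset (Fin n)) : Prop :=
  ∀ T ⊆ S, ¬ nonExpanding A T

/-- A set is `t`-unobstructed if it contains no non-expanding subset of size at most `t`. -/
def tUnobstructed {n : ℕ} (t : ℕ) (A : Fin n → Fin n → Prop) (S : Finset (Fin n)) : Prop :=
  ∀ T ⊆ S, T.card ≤ t → ¬ nonExpanding A T

/-- Maximum size of an unobstructed vertex set. -/
def maxUnobstructed {n : ℕ} (A : Fin n → Fin n → Prop) : ℕ :=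
  ((univ : Finset (Finset (Fin n))).filter fun S => unobstructed A S).sup Finset.card

/-- Maximum size of a `t`-unobstructed vertex set. -/
def maxTUnobstructed {n : ℕ} (t : ℕ) (A : Fin n → Fin n → Prop) : ℕ :=
  ((univ : Finset (Finset (Fin n))).filter fun S => tUnobstructed t A S).sup Finset.card

/-- A symmetric matrix is `t`-saturated if its rank equals the maximum size of a
`t`-unobstructed set of vertices of its graph. -/
def saturated (t : ℕ) {n : ℕ} (Q : Matrix (Fin n) (Fin n) ℂ) : Prop :=
  Q.rank = maxTUnobstructed t (adjOf Q)

/-- `min_{S} (n - |S| + |N(S)|)` over all vertex subsets of `G(Q)`. -/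
def rankFormula {n : ℕ} (Q : Matrix (Fin n) (Fin n) ℂ) : ℕ :=
  (univ : Finset (Finset (Fin n))).inf' univ_nonempty
    fun S => n - S.card + (nbr (adjOf Q) S).card

/-- The induced graph on the vertex set `S` is connected. -/
def connOn {n : ℕ} (A : Fin n → Fin n → Prop) (S : Finset (Fin n)) : Prop :=
  ∀ u ∈ S, ∀ v ∈ S, Relation.ReflTransGen (fun a b => a ∈ S ∧ b ∈ S ∧ A a b) u v

/-- There is a cycle of length `ℓ` through `v` (a cycle of length 1 is a self-loop). -/
def cycleThrough {n : ℕ} (A : Fin n → Fin n → Prop) (ℓ : ℕ) (v : Fin n) : Prop :=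
  ∃ f : ZMod ℓ → Fin n, Function.Injective f ∧ (∀ i, A (f i) (f (i + 1))) ∧ ∃ i, f i = v

/-- Well-separated graph (for parameters `N`, the ambient size, and `s`):
(W1) every connected subgraph on at most `5s` vertices has at most `s-1` vertices of
degree at most `ln ln N`; (W2) no cycle of length 1 or of length between 3 and `12 s`
contains a vertex of degree at most `ln ln N`. -/
def wellSeparated (N s : ℕ) {n : ℕ} (A : Fin n → Fin n → Prop) : Prop :=
  (∀ S : Finset (Fin n), S.card ≤ 5 * s → connOn A S →
      (S.filter fun v => (deg A v : ℝ) ≤ Real.log (Real.log N)).card ≤ s - 1) ∧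
  (∀ v : Fin n, (deg A v : ℝ) ≤ Real.log (Real.log N) →
      ∀ ℓ : ℕ, (ℓ = 1 ∨ (3 ≤ ℓ ∧ ℓ ≤ 12 * s)) → ¬ cycleThrough A ℓ v)

/-- Number of edges joining `S` to its complement. -/
def crossEdges {n : ℕ} (A : Fin n → Fin n → Prop) (S : Finset (Fin n)) : ℕ :=
  (univ.filter fun e : Fin n × Fin n => e.1 ∈ S ∧ e.2 ∉ S ∧ A e.1 e.2).card

/-- Small set expander (for ambient size `N` and parameter `s`). -/
def smallSetExpander (N s : ℕ) {n : ℕ} (A : Fin n → Fin n → Prop) : Prop :=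
  ∀ S : Finset (Fin n), (S.card : ℝ) ≤ (N : ℝ) / (Real.log N) ^ ((3:ℝ)/2) →
    (S.card ≤ crossEdges A S ∨
      ∃ S' ⊆ S, S'.card ≤ s - 1 ∧ crossEdges A S' < S'.card)

/-- Number of edges induced on `S` (counting loops once). -/
def inducedEdges {n : ℕ} (A : Fin n → Fin n → Prop) (S : Finset (Fin n)) : ℕ :=
  (univ.filter fun e : Fin n × Fin n => e.1 ∈ S ∧ e.2 ∈ S ∧ e.1 ≤ e.2 ∧ A e.1 e.2).card

/-- Locally sparse: every nonempty set of at most `N/(ln N)^{3/2}` vertices induces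
fewer than `4|S|` edges (i.e. has average degree less than 8). -/
def locallySparse (N : ℕ) {n : ℕ} (A : Fin n → Fin n → Prop) : Prop :=
  ∀ S : Finset (Fin n), S.Nonempty → (S.card : ℝ) ≤ (N : ℝ) / (Real.log N) ^ ((3:ℝ)/2) →
    inducedEdges A S < 4 * S.card

/-- `S` is nice: at least two vertices are each adjacent to exactly one vertex of `S`. -/
def nice {n : ℕ} (A : Fin n → Fin n → Prop) (S : Finset (Fin n)) : Prop :=
  2 ≤ (univ.filter fun v => (S.filter fun u => A v u).card = 1).card

/-- `S` is nearly nice: at least one vertex is adjacent to exactly one vertex of `S`. -/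
def nearlyNice {n : ℕ} (A : Fin n → Fin n → Prop) (S : Finset (Fin n)) : Prop :=
  1 ≤ (univ.filter fun v => (S.filter fun u => A v u).card = 1).card

/-- A good graph (for ambient size `N`, parameter `s` and probability `p`; here
`k = ln ln N / (2p)`). -/
def goodGraph (N s : ℕ) (p : ℝ) {n : ℕ} (A : Fin n → Fin n → Prop) : Prop :=
  (∀ S : Finset (Fin n), S.Nonempty → ¬ nice A S → (∀ T ⊂ S, T.Nonempty → nice A T) →
      (Real.log (Real.log N) / (2 * p) + 1 ≤ (S.card : ℝ) ∨
        ∃ T ⊆ S, T.card ≤ s - 1 ∧ nonExpanding A T)) ∧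
  (∀ S : Finset (Fin n), S.Nonempty → ¬ nearlyNice A S →
      (∀ T ⊂ S, T.Nonempty → nearlyNice A T) →
      (Real.log (Real.log N) / (2 * p) + 1 ≤ (S.card : ℝ) ∨
        (S.card ≤ s - 1 ∧ nonExpanding A S))) ∧
  (((univ.filter fun v : Fin n => deg A v < s).card : ℝ) ≤ 1 / (p * Real.log N)) ∧
  wellSeparated N s A

/-- A symmetric matrix is good if its graph is good. -/
def goodMatrix (N s : ℕ) (p : ℝ) {n : ℕ} (Q : Matrix (Fin n) (Fin n) ℂ) : Prop :=
  goodGraph N s p (adjOf Q)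

/-- The upper-left `min m n × min m n` minor of a matrix. -/
def minor {n : ℕ} (Q : Matrix (Fin n) (Fin n) ℂ) (m : ℕ) :
    Matrix (Fin (min m n)) (Fin (min m n)) ℂ :=
  Q.submatrix (Fin.castLE (min_le_right m n)) (Fin.castLE (min_le_right m n))

end RankSparse

/-- `T`: the union of all minimal non-expanding vertex subsets of size at most
`s - 1`. -/
noncomputable def Tset {n : ℕ} (s : ℕ) (A : Fin n → Fin n → Prop) : Finset (Fin n) :=
  univ.filter fun v => ∃ S : Finset (Fin n),
    v ∈ S ∧ S.card ≤ s - 1 ∧ minNonExpanding A S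

/-- `M` is a perfect matching between `T₁` and `B`: a set of vertex-disjoint
edges of the graph, each with first endpoint in `T₁` and second endpoint in `B`,
covering each vertex of `T₁` exactly once and each vertex of `B` exactly once. -/
def isMatching {n : ℕ} (A : Fin n → Fin n → Prop) (T₁ B : Finset (Fin n))
    (M : Finset (Fin n × Fin n)) : Prop :=
  (∀ e ∈ M, e.1 ∈ T₁ ∧ e.2 ∈ B ∧ A e.1 e.2) ∧
  (∀ e ∈ M, ∀ f ∈ M, e ≠ f →
    e.1 ≠ f.1 ∧ e.1 ≠ f.2 ∧ e.2 ≠ f.1 ∧ e.2 ≠ f.2) ∧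
  (∀ v ∈ T₁, ∃! e, e ∈ M ∧ e.1 = v) ∧
  (∀ v ∈ B, ∃! e, e ∈ M ∧ e.2 = v)

/-!
Let `T` be the union of the small minimal non-expanding sets. A vertex of `T` has degree less
than `s`, so by (W2) it carries no loop and lies on no short cycle, while by (W1) no long cycle
has all its edges incident to `T`: any `2s` consecutive vertices of it would contain `s`
low-degree vertices. Hence the edges incident to `T` form a forest. By minimality every vertex
of `N(T)` has two neighbours in `T`; in a forest this forces `T ∩ N(T) = ∅`, and peeling off
leaves gives an injection `g : N(T) → T` along edges, i.e. a perfect matching between `g(N(T))`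
and `N(T)`. It is unique because the symmetric difference of two such matchings would span a
subgraph of minimum degree two inside the forest.
-/

namespace SimpleGraph

variable {V : Type*} {G : SimpleGraph V}

theorem IsAcyclic.exists_existsUnique_adj [Finite V] [Nonempty V] (hG : G.IsAcyclic)
    (h : ∀ v, ∃ w, G.Adj v w) : ∃ v, ∃! w, G.Adj v w := by
  obtain ⟨u, v, p, hp, hmax⟩ := Walk.exists_isPath_forall_isPath_length_le_length G
  have hnil : ¬p.Nil := by
    intro hnil
    obtain ⟨w, hw⟩ := h u
    have := hmax _ _ _ (Walk.IsPath.of_adj hw)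
    simp [hnil.length_eq_zero] at this
  refine ⟨u, p.snd, p.adj_snd hnil, fun w hadj ↦ hG.eq_snd_of_adj_start hp hadj ?_⟩
  by_contra hw
  have := hmax _ _ _ (hp.cons (by simpa using hw) : (p.cons hadj.symm).IsPath)
  simp at this

theorem IsAcyclic.exists_mem_existsUnique_adj (hG : G.IsAcyclic) {X : Finset V}
    (hX : X.Nonempty) (h : ∀ v ∈ X, ∃ w ∈ X, G.Adj v w) :
    ∃ v ∈ X, ∃! w, w ∈ X ∧ G.Adj v w := by
  have := hX.to_subtype
  obtain ⟨⟨v, hv⟩, ⟨w, hw⟩, hvw, huniq⟩ := (hG.induce (X : Set V)).exists_existsUnique_adj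
    fun ⟨v, hv⟩ ↦ let ⟨w, hw, hvw⟩ := h v hv; ⟨⟨w, hw⟩, hvw⟩
  exact ⟨v, hv, w, ⟨hw, hvw⟩, fun u ⟨hu, hvu⟩ ↦ congrArg Subtype.val (huniq ⟨u, hu⟩ hvu)⟩

theorem IsAcyclic.eq_empty_of_forall_two_adj (hG : G.IsAcyclic) {X : Finset V}
    (hX : ∀ v ∈ X, ∃ w₁ ∈ X, ∃ w₂ ∈ X, w₁ ≠ w₂ ∧ G.Adj v w₁ ∧ G.Adj v w₂) : X = ∅ := by
  by_contra hne
  obtain ⟨v, hv, w, -, huniq⟩ := hG.exists_mem_existsUnique_adj (nonempty_iff_ne_empty.2 hne)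
    fun v hv ↦ let ⟨w₁, hw₁, _, _, _, h₁, _⟩ := hX v hv; ⟨w₁, hw₁, h₁⟩
  obtain ⟨w₁, hw₁, w₂, hw₂, hne, h₁, h₂⟩ := hX v hv
  exact hne ((huniq w₁ ⟨hw₁, h₁⟩).trans (huniq w₂ ⟨hw₂, h₂⟩).symm)

theorem IsAcyclic.disjoint_of_forall_two_adj (hG : G.IsAcyclic) {T B : Finset V}
    (hTB : ∀ t ∈ T, ∀ v, G.Adj t v → v ∈ B)
    (hB : ∀ b ∈ B, ∃ t₁ ∈ T, ∃ t₂ ∈ T, t₁ ≠ t₂ ∧ G.Adj t₁ b ∧ G.Adj t₂ b) : Disjoint T B := by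
  refine disjoint_iff_inter_eq_empty.2 (hG.eq_empty_of_forall_two_adj fun x hx ↦ ?_)
  obtain ⟨hxT, hxB⟩ := mem_inter.1 hx
  obtain ⟨t₁, ht₁, t₂, ht₂, hne, h₁, h₂⟩ := hB x hxB
  exact ⟨t₁, mem_inter.2 ⟨ht₁, hTB x hxT t₁ h₁.symm⟩, t₂, mem_inter.2 ⟨ht₂, hTB x hxT t₂ h₂.symm⟩,
    hne, h₁.symm, h₂.symm⟩

/-- A leaf of the forest spanned by `B` and its neighbours in `T` cannot lie in `B`, whose
vertices have two neighbours in `T`. -/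
theorem IsAcyclic.exists_adj_forall_adj_eq (hG : G.IsAcyclic) {T B : Finset V}
    (hBne : B.Nonempty)
    (hB : ∀ b ∈ B, ∃ t₁ ∈ T, ∃ t₂ ∈ T, t₁ ≠ t₂ ∧ G.Adj t₁ b ∧ G.Adj t₂ b) :
    ∃ x ∈ T, ∃ y ∈ B, G.Adj x y ∧ ∀ b ∈ B, G.Adj x b → b = y := by
  set X := B ∪ T.filter fun t ↦ ∃ b ∈ B, G.Adj t b
  have mem_X {t b} (ht : t ∈ T) (hb : b ∈ B) (htb : G.Adj t b) : t ∈ X :=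
    mem_union_right _ (mem_filter.2 ⟨ht, b, hb, htb⟩)
  have hX : ∀ v ∈ X, ∃ w ∈ X, G.Adj v w := by
    intro v hv
    rcases mem_union.1 hv with hvB | hvT
    · obtain ⟨t, ht, -, -, -, htv, -⟩ := hB v hvB
      exact ⟨t, mem_X ht hvB htv, htv.symm⟩
    · obtain ⟨-, b, hb, hvb⟩ := mem_filter.1 hvT
      exact ⟨b, mem_union_left _ hb, hvb⟩
  obtain ⟨x, hxX, y, -, huniq⟩ :=
    hG.exists_mem_existsUnique_adj (hBne.mono subset_union_left) hX
  have hxT : x ∈ T ∧ ∃ b ∈ B, G.Adj x b := by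
    refine mem_filter.1 ((mem_union.1 hxX).resolve_left fun hxB ↦ ?_)
    obtain ⟨t₁, ht₁, t₂, ht₂, hne, h₁, h₂⟩ := hB x hxB
    exact hne ((huniq t₁ ⟨mem_X ht₁ hxB h₁, h₁.symm⟩).trans
      (huniq t₂ ⟨mem_X ht₂ hxB h₂, h₂.symm⟩).symm)
  obtain ⟨hxT, b, hb, hxb⟩ := hxT
  exact ⟨x, hxT, b, hb, hxb, fun b' hb' hxb' ↦
    (huniq b' ⟨mem_union_left _ hb', hxb'⟩).trans (huniq b ⟨mem_union_left _ hb, hxb⟩).symm⟩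

theorem IsAcyclic.exists_injOn_adj (hG : G.IsAcyclic) (T B : Finset V)
    (hB : ∀ b ∈ B, ∃ t₁ ∈ T, ∃ t₂ ∈ T, t₁ ≠ t₂ ∧ G.Adj t₁ b ∧ G.Adj t₂ b) :
    ∃ g : V → V, Set.InjOn g B ∧ ∀ b ∈ B, g b ∈ T ∧ G.Adj (g b) b := by
  induction B using Finset.strongInduction with
  | H B ih =>
  rcases B.eq_empty_or_nonempty with rfl | hBne
  · exact ⟨id, by simp, by simp⟩
  obtain ⟨x, hx, b, hb, hxb, hleaf⟩ := hG.exists_adj_forall_adj_eq hBne hB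
  obtain ⟨g, hg, hgB⟩ := ih (B.erase b) (erase_ssubset hb)
    fun b' hb' ↦ hB b' (mem_of_mem_erase hb')
  have hgx : ∀ b' ∈ B.erase b, g b' ≠ x := fun b' hb' hgb' ↦
    ne_of_mem_erase hb' (hleaf b' (mem_of_mem_erase hb') (hgb' ▸ (hgB b' hb').2))
  have heq : Set.EqOn (Function.update g b x) g (B.erase b) := fun b' hb' ↦
    Function.update_of_ne (ne_of_mem_erase hb') _ _
  refine ⟨Function.update g b x, ?_, fun b' hb' ↦ ?_⟩
  · rw [← insert_erase hb, coe_insert, Set.injOn_insert (by simp)]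
    refine ⟨hg.congr heq.symm, fun ⟨b', hb', h⟩ ↦ hgx b' hb' ?_⟩
    rwa [heq hb', Function.update_self] at h
  · rcases eq_or_ne b' b with rfl | hne
    · simpa using ⟨hx, hxb⟩
    · rw [heq (mem_erase.2 ⟨hne, hb'⟩)]
      exact hgB b' (mem_erase.2 ⟨hne, hb'⟩)

end SimpleGraph

section

variable {n : ℕ} {A : Fin n → Fin n → Prop}

theorem mem_nbr {S : Finset (Fin n)} {w : Fin n} : w ∈ nbr A S ↔ ∃ u ∈ S, A u w := by
  simp [nbr]

theorem nbr_mono {S S' : Finset (Fin n)} (h : S ⊆ S') : nbr A S ⊆ nbr A S' := fun _ hw ↦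
  let ⟨u, hu, huw⟩ := mem_nbr.1 hw; mem_nbr.2 ⟨u, h hu, huw⟩

theorem deg_le_card_nbr {S : Finset (Fin n)} {v : Fin n} (hv : v ∈ S) :
    deg A v ≤ (nbr A S).card :=
  card_le_card fun _ hu ↦ mem_nbr.2 ⟨v, hv, (mem_filter.1 hu).2⟩

/-- By minimality `|N(S \ {u})| ≥ |S| - 1 ≥ |N(S)|`, so deleting `u` does not shrink `N(S)`. -/
theorem minNonExpanding.exists_two_adj {S : Finset (Fin n)} (hS : minNonExpanding A S)
    {w : Fin n} (hw : w ∈ nbr A S) : ∃ y ∈ S, ∃ z ∈ S, y ≠ z ∧ A y w ∧ A z w := by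
  obtain ⟨u, hu, huw⟩ := mem_nbr.1 hw
  have hsub : nbr A (S.erase u) ⊆ nbr A S := nbr_mono (erase_subset u S)
  have hle : (nbr A S).card ≤ (nbr A (S.erase u)).card := by
    have := hS.2 _ (erase_ssubset hu)
    have := hS.1
    rw [nonExpanding, card_erase_of_mem hu] at *
    omega
  obtain ⟨z, hz, hzw⟩ := mem_nbr.1 (eq_of_subset_of_card_le hsub hle ▸ hw)
  exact ⟨u, hu, z, mem_of_mem_erase hz, (ne_of_mem_erase hz).symm, huw, hzw⟩

theorem mem_Tset {s : ℕ} {v : Fin n} :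
    v ∈ Tset s A ↔ ∃ S : Finset (Fin n), v ∈ S ∧ S.card ≤ s - 1 ∧ minNonExpanding A S := by
  simp [Tset]

theorem deg_lt_of_mem_Tset {s : ℕ} {v : Fin n} (hv : v ∈ Tset s A) : deg A v < s := by
  obtain ⟨S, hvS, hcard, hS⟩ := mem_Tset.1 hv
  have := deg_le_card_nbr (A := A) hvS
  have := hS.1
  rw [nonExpanding] at this
  omega

theorem exists_two_adj_of_mem_nbr_Tset {s : ℕ} {w : Fin n} (hw : w ∈ nbr A (Tset s A)) :
    ∃ y ∈ Tset s A, ∃ z ∈ Tset s A, y ≠ z ∧ A y w ∧ A z w := by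
  obtain ⟨u, hu, huw⟩ := mem_nbr.1 hw
  obtain ⟨S, huS, hcard, hS⟩ := mem_Tset.1 hu
  obtain ⟨y, hy, z, hz, hyz, hyw, hzw⟩ := hS.exists_two_adj (mem_nbr.2 ⟨u, huS, huw⟩)
  exact ⟨y, mem_Tset.2 ⟨S, hy, hcard, hS⟩, z, mem_Tset.2 ⟨S, hz, hcard, hS⟩, hyz, hyw, hzw⟩

def incidentGraph (A : Fin n → Fin n → Prop) (U : Finset (Fin n)) : SimpleGraph (Fin n) :=
  SimpleGraph.fromRel fun a b ↦ A a b ∧ a ∈ U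

theorem incidentGraph_adj (hsymm : ∀ i j, A i j ↔ A j i) {U : Finset (Fin n)} {a b : Fin n} :
    (incidentGraph A U).Adj a b ↔ a ≠ b ∧ A a b ∧ (a ∈ U ∨ b ∈ U) := by
  simp only [incidentGraph, SimpleGraph.fromRel_adj, hsymm b a]
  tauto

theorem connOn_image_range (hsymm : ∀ i j, A i j ↔ A j i) (p : ℕ → Fin n)
    (hadj : ∀ i, A (p i) (p (i + 1))) (m : ℕ) : connOn A ((range m).image p) := by
  set S := (range m).image p
  let R := fun a b ↦ a ∈ S ∧ b ∈ S ∧ A a b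
  have : Std.Symm R := ⟨fun a b ⟨ha, hb, hab⟩ ↦ ⟨hb, ha, (hsymm a b).1 hab⟩⟩
  have hfrom0 : ∀ j < m, Relation.ReflTransGen R (p 0) (p j) := by
    intro j hj
    induction j with
    | zero => exact .refl
    | succ j ih =>
      refine .tail (ih (by omega)) ⟨mem_image_of_mem p ?_, mem_image_of_mem p ?_, hadj j⟩ <;>
        simp only [mem_range] <;> omega
  intro u hu v hv
  obtain ⟨i, hi, rfl⟩ := mem_image.1 hu
  obtain ⟨j, hj, rfl⟩ := mem_image.1 hv
  exact (Std.Symm.symm _ _ (hfrom0 i (mem_range.1 hi))).trans (hfrom0 j (mem_range.1 hj))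

/-- (W1) applied to `2s` consecutive vertices of the path: each of its `s` disjoint edges
contributes a vertex of low degree. -/
theorem wellSeparated.false_of_path {s : ℕ} (hws : wellSeparated n s A) (hs : 1 ≤ s)
    (hsymm : ∀ i j, A i j ↔ A j i) (p : ℕ → Fin n) (hp : Set.InjOn p (Set.Iio (2 * s)))
    (hadj : ∀ i, A (p i) (p (i + 1)))
    (hlow : ∀ i, (deg A (p i) : ℝ) ≤ Real.log (Real.log n) ∨
      (deg A (p (i + 1)) : ℝ) ≤ Real.log (Real.log n)) : False := by
  set S := (range (2 * s)).image p
  have hS : S.card = 2 * s := by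
    rw [card_image_of_injOn (by simpa using hp), card_range]
  obtain ⟨g, hg⟩ : ∃ g : ℕ → ℕ, ∀ i, 2 * i ≤ g i ∧ g i ≤ 2 * i + 1 ∧
      (deg A (p (g i)) : ℝ) ≤ Real.log (Real.log n) :=
    ⟨fun i ↦ if (deg A (p (2 * i)) : ℝ) ≤ Real.log (Real.log n) then 2 * i else 2 * i + 1,
      fun i ↦ by
        dsimp only
        split_ifs with h
        exacts [⟨le_rfl, by omega, h⟩, ⟨by omega, le_rfl, (hlow (2 * i)).resolve_left h⟩]⟩
  have hcount : s ≤ (S.filter fun v ↦ (deg A v : ℝ) ≤ Real.log (Real.log n)).card := by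
    refine (card_range s).symm.le.trans (card_le_card_of_injOn (p ∘ g) (fun i hi ↦ ?_) ?_)
    · obtain ⟨-, hgi, hlowi⟩ := hg i
      exact mem_filter.2 ⟨mem_image_of_mem p (mem_range.2 (by rw [coe_range, Set.mem_Iio] at hi; omega)),
        hlowi⟩
    · intro i hi j hj hij
      have := hg i
      have := hg j
      simp only [coe_range, Set.mem_Iio] at hi hj
      have := hp (x₁ := g i) (x₂ := g j) (by simp only [Set.mem_Iio]; omega)
        (by simp only [Set.mem_Iio]; omega) hij
      omega
  have := hws.1 S (by omega) (connOn_image_range hsymm p hadj _)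
  omega

open Fin.NatCast in
theorem wellSeparated.isAcyclic_incidentGraph {s : ℕ} (hws : wellSeparated n s A) (hs : 1 ≤ s)
    (hsymm : ∀ i j, A i j ↔ A j i) {U : Finset (Fin n)}
    (hU : ∀ u ∈ U, (deg A u : ℝ) ≤ Real.log (Real.log n)) :
    (incidentGraph A U).IsAcyclic := by
  rw [SimpleGraph.isAcyclic_iff_free_cycleGraph]
  rintro ℓ hℓ ⟨f⟩
  obtain ⟨k, rfl⟩ : ∃ k, ℓ = k + 3 := ⟨ℓ - 3, by omega⟩
  have hf (i : Fin (k + 3)) : A (f i) (f (i + 1)) ∧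
      ((deg A (f i) : ℝ) ≤ Real.log (Real.log n) ∨
        (deg A (f (i + 1)) : ℝ) ≤ Real.log (Real.log n)) := by
    obtain ⟨-, hA, hi | hi⟩ := (incidentGraph_adj hsymm).1
      (f.toHom.map_adj (SimpleGraph.cycleGraph_adj.2 (Or.inr (add_sub_cancel_left i 1))))
    exacts [⟨hA, Or.inl (hU _ hi)⟩, ⟨hA, Or.inr (hU _ hi)⟩]
  by_cases hshort : k + 3 ≤ 12 * s
  · -- `ZMod (k + 3)` is `Fin (k + 3)` by definition, so the copy is itself the cycle.
    have hcyc : ∀ i, cycleThrough A (k + 3) (f i) := fun i ↦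
      ⟨f, f.injective, fun i ↦ (hf i).1, i, rfl⟩
    obtain hlow | hlow := (hf 0).2
    exacts [hws.2 _ hlow _ (Or.inr ⟨hℓ, hshort⟩) (hcyc 0),
      hws.2 _ hlow _ (Or.inr ⟨hℓ, hshort⟩) (hcyc 1)]
  · refine hws.false_of_path hs hsymm (fun i : ℕ ↦ f (i : Fin (k + 3))) ?_ (fun i ↦ ?_) (fun i ↦ ?_)
    · intro i hi j hj hij
      have := Fin.val_eq_of_eq (f.injective hij)
      simp only [Fin.val_natCast, Set.mem_Iio] at this hi hj
      rwa [Nat.mod_eq_of_lt (by omega), Nat.mod_eq_of_lt (by omega)] at this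
    · simpa only [Nat.cast_succ] using (hf (i : Fin (k + 3))).1
    · simpa only [Nat.cast_succ] using (hf (i : Fin (k + 3))).2

theorem wellSeparated.not_adj_self {s : ℕ} (hws : wellSeparated n s A) {v : Fin n}
    (hv : (deg A v : ℝ) ≤ Real.log (Real.log n)) : ¬ A v v := fun hvv ↦
  hws.2 v hv 1 (Or.inl rfl) ⟨fun _ ↦ v, fun _ _ _ ↦ Subsingleton.elim _ _, fun _ ↦ hvv, 0, rfl⟩

section isMatching

variable {T₁ B : Finset (Fin n)} {M M' : Finset (Fin n × Fin n)}

theorem isMatching_image {g : Fin n → Fin n} (hg : Set.InjOn g B) (hgB : ∀ b ∈ B, A (g b) b)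
    (hdisj : ∀ b ∈ B, g b ∉ B) :
    isMatching A (B.image g) B (B.image fun b ↦ (g b, b)) := by
  simp only [isMatching, mem_image, forall_exists_index, and_imp]
  refine ⟨?_, ?_, ?_, ?_⟩
  · rintro _ b hb rfl
    exact ⟨⟨b, hb, rfl⟩, hb, hgB b hb⟩
  · rintro _ b hb rfl _ b' hb' rfl hne
    have hbb' : b ≠ b' := fun h ↦ hne (h ▸ rfl)
    exact ⟨fun h ↦ hbb' (hg hb hb' h), fun h : g b = b' ↦ hdisj b hb (h ▸ hb'),
      fun h : b = g b' ↦ hdisj b' hb' (h ▸ hb), hbb'⟩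
  · rintro _ b hb rfl
    refine ⟨(g b, b), ⟨⟨b, hb, rfl⟩, rfl⟩, ?_⟩
    rintro _ ⟨⟨b', hb', rfl⟩, h⟩
    rw [hg hb' hb h]
  · intro b hb
    refine ⟨(g b, b), ⟨⟨b, hb, rfl⟩, rfl⟩, ?_⟩
    rintro _ ⟨⟨b', hb', rfl⟩, rfl⟩
    rfl

theorem isMatching.exists_of_mem_sdiff (hM : isMatching A T₁ B M) (hM' : isMatching A T₁ B M')
    {e : Fin n × Fin n} (he : e ∈ M) (he' : e ∉ M') :
    (∃ f ∈ M', f ∉ M ∧ f.1 = e.1 ∧ f.2 ≠ e.2) ∧ (∃ f ∈ M', f ∉ M ∧ f.2 = e.2 ∧ f.1 ≠ e.1) := by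
  obtain ⟨he₁, he₂, -⟩ := hM.1 e he
  obtain ⟨f₁, ⟨hf₁, hf₁e⟩, -⟩ := hM'.2.2.1 e.1 he₁
  obtain ⟨f₂, ⟨hf₂, hf₂e⟩, -⟩ := hM'.2.2.2 e.2 he₂
  have hf₁M : f₁ ∉ M := fun h ↦ (hM.2.1 f₁ h e he (ne_of_mem_of_not_mem hf₁ he')).1 hf₁e
  have hf₂M : f₂ ∉ M := fun h ↦ (hM.2.1 f₂ h e he (ne_of_mem_of_not_mem hf₂ he')).2.2.2 hf₂e
  exact ⟨⟨f₁, hf₁, hf₁M, hf₁e, fun h ↦ he' (Prod.ext hf₁e h ▸ hf₁)⟩,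
    ⟨f₂, hf₂, hf₂M, hf₂e, fun h ↦ he' (Prod.ext h hf₂e ▸ hf₂)⟩⟩

theorem isMatching.exists_of_mem_symmDiff (hM : isMatching A T₁ B M)
    (hM' : isMatching A T₁ B M') {e : Fin n × Fin n} (he : e ∈ symmDiff M M') :
    (∃ f ∈ symmDiff M M', f.1 = e.1 ∧ f.2 ≠ e.2) ∧
      (∃ f ∈ symmDiff M M', f.2 = e.2 ∧ f.1 ≠ e.1) := by
  rcases mem_symmDiff.1 he with ⟨he, he'⟩ | ⟨he, he'⟩
  · obtain ⟨⟨f₁, hf₁, hf₁', h₁⟩, ⟨f₂, hf₂, hf₂', h₂⟩⟩ := hM.exists_of_mem_sdiff hM' he he'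
    exact ⟨⟨f₁, mem_symmDiff.2 (Or.inr ⟨hf₁, hf₁'⟩), h₁⟩,
      ⟨f₂, mem_symmDiff.2 (Or.inr ⟨hf₂, hf₂'⟩), h₂⟩⟩
  · obtain ⟨⟨f₁, hf₁, hf₁', h₁⟩, ⟨f₂, hf₂, hf₂', h₂⟩⟩ := hM'.exists_of_mem_sdiff hM he he'
    exact ⟨⟨f₁, mem_symmDiff.2 (Or.inl ⟨hf₁, hf₁'⟩), h₁⟩,
      ⟨f₂, mem_symmDiff.2 (Or.inl ⟨hf₂, hf₂'⟩), h₂⟩⟩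

/-- Every endpoint of an edge of `M ∆ M'` is met by one edge of `M \ M'` and one of `M' \ M`,
so these endpoints span a subgraph of minimum degree two, impossible in a forest. -/
theorem isMatching.eq_of_isAcyclic {G : SimpleGraph (Fin n)} (hG : G.IsAcyclic)
    (hadj : ∀ t ∈ T₁, ∀ v, A t v → G.Adj t v)
    (hM : isMatching A T₁ B M) (hM' : isMatching A T₁ B M') : M = M' := by
  set D := symmDiff M M'
  set X := D.image Prod.fst ∪ D.image Prod.snd
  have hDadj : ∀ e ∈ D, G.Adj e.1 e.2 := by
    intro e he
    rcases mem_symmDiff.1 he with ⟨he, -⟩ | ⟨he, -⟩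
    · exact hadj _ (hM.1 e he).1 _ (hM.1 e he).2.2
    · exact hadj _ (hM'.1 e he).1 _ (hM'.1 e he).2.2
  have hfst {e} (he : e ∈ D) : e.1 ∈ X := mem_union_left _ (mem_image_of_mem _ he)
  have hsnd {e} (he : e ∈ D) : e.2 ∈ X := mem_union_right _ (mem_image_of_mem _ he)
  have hX : ∀ x ∈ X, ∃ w₁ ∈ X, ∃ w₂ ∈ X, w₁ ≠ w₂ ∧ G.Adj x w₁ ∧ G.Adj x w₂ := by
    intro x hx
    obtain ⟨e, he, rfl⟩ | ⟨e, he, rfl⟩ := by simpa only [X, mem_union, mem_image] using hx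
    · obtain ⟨f, hf, hfe, hne⟩ := (hM.exists_of_mem_symmDiff hM' he).1
      exact ⟨e.2, hsnd he, f.2, hsnd hf, hne.symm, hDadj e he, hfe ▸ hDadj f hf⟩
    · obtain ⟨f, hf, hfe, hne⟩ := (hM.exists_of_mem_symmDiff hM' he).2
      exact ⟨e.1, hfst he, f.1, hfst hf, hne.symm, (hDadj e he).symm, hfe ▸ (hDadj f hf).symm⟩
  rw [← symmDiff_eq_bot]
  exact image_eq_empty.1 (union_eq_empty.1 (hG.eq_empty_of_forall_two_adj hX)).1

end isMatching

end

/-- Lemma `matching`: for a well-separated graph `G` on `n`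
vertices (with `ln ln n ≥ s`), with `T` the union of all minimal non-expanding
vertex subsets of size at most `s-1`, there is a subset `T₁ ⊆ T` with
`|T₁| = |N(T)|` such that `G` contains exactly one perfect matching between
`T₁` and `N(T)`. -/
theorem matching (s n : ℕ) (hs : 1 ≤ s) (hn : (s : ℝ) ≤ Real.log (Real.log n))
    (A : Fin n → Fin n → Prop) (hsymm : ∀ i j, A i j ↔ A j i)
    (hws : wellSeparated n s A) :
    ∃ T₁ ⊆ Tset s A, T₁.card = (nbr A (Tset s A)).card ∧
      ∃! M : Finset (Fin n × Fin n), isMatching A T₁ (nbr A (Tset s A)) M := by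
  set T := Tset s A
  set H := incidentGraph A T
  have hlow (t) (ht : t ∈ T) : (deg A t : ℝ) ≤ Real.log (Real.log n) :=
    (Nat.cast_le.2 (deg_lt_of_mem_Tset ht).le).trans hn
  have hH : H.IsAcyclic := hws.isAcyclic_incidentGraph hs hsymm hlow
  have hadj (t) (ht : t ∈ T) (v) (htv : A t v) : H.Adj t v :=
    (incidentGraph_adj hsymm).2
      ⟨fun h ↦ hws.not_adj_self (hlow t ht) (h ▸ htv), htv, Or.inl ht⟩
  have htwo (b) (hb : b ∈ nbr A T) :
      ∃ t₁ ∈ T, ∃ t₂ ∈ T, t₁ ≠ t₂ ∧ H.Adj t₁ b ∧ H.Adj t₂ b :=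
    let ⟨t₁, ht₁, t₂, ht₂, hne, h₁, h₂⟩ := exists_two_adj_of_mem_nbr_Tset hb
    ⟨t₁, ht₁, t₂, ht₂, hne, hadj t₁ ht₁ b h₁, hadj t₂ ht₂ b h₂⟩
  have hdisj : Disjoint T (nbr A T) := hH.disjoint_of_forall_two_adj
    (fun t ht v h ↦ mem_nbr.2 ⟨t, ht, ((incidentGraph_adj hsymm).1 h).2.1⟩) htwo
  obtain ⟨g, hg, hgB⟩ := hH.exists_injOn_adj T (nbr A T) htwo
  have hgT : (nbr A T).image g ⊆ T := image_subset_iff.2 fun b hb ↦ (hgB b hb).1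
  have hM : isMatching A ((nbr A T).image g) (nbr A T) ((nbr A T).image fun b ↦ (g b, b)) :=
    isMatching_image hg (fun b hb ↦ ((incidentGraph_adj hsymm).1 (hgB b hb).2).2.1)
      (fun b hb ↦ disjoint_left.1 hdisj (hgB b hb).1)
  exact ⟨_, hgT, card_image_of_injOn hg, _, hM,
    fun M' hM' ↦ hM'.eq_of_isAcyclic hH (fun t ht ↦ hadj t (hgT ht)) hM⟩
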